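/- Every minor of exp(tN), where N is the lower shift matrix, is of the form a·t^d for some rational a ≥ 0 and nonnegative integer d; moreover minors taken on row set i_1 < ⋯ < i_k and column set j_1 < ⋯ < j_k with i_l ≥ j_l for all l have a > 0. -/

import Mathlib

open Matrix

/-- The lower shift matrix `N`. -/
def lowerShift (n : ℕ) : Matrix (Fin n) (Fin n) ℝ :=
  Matrix.of fun i j => if (i : ℕ) = (j : ℕ) + 1 then 1 else 0

/-!
Every nonzero term of the Leibniz expansion of the minor of `exp (t N)` on rows `r` and columns `c`
carries the power `t ^ (∑ r - ∑ c)`, so the minor is `A(r, c) t ^ (∑ r - ∑ c)`, where `A(r, c)` is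
the same minor of `exp N = (1 / (i - j)!)`.

Since `(i - j) / (i - j)! = 1 / (i - (j + 1))!` (that is, `d/dt exp (t N) = exp (t N) N`, and `N`
shifts columns), `(∑ r - ∑ c) A(r, c) = ∑_q A(r, c + e_q)`. A minor with some `r l < c l` has a
zero block of size `(l + 1) × (k - l)` and vanishes, and `A(r, r) = 1`. For `c ≤ r`, `c ≠ r`,
induction on `∑ (r - c)` makes every term on the right nonnegative, and raising the last column
`q` with `c q < r q` gives a positive one.
-/

open Finset

namespace Matrix

variable {n R : Type*} [Fintype n] [DecidableEq n] [CommRing R]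

theorem det_eq_zero_of_card_lt_card_add_card (M : Matrix n n R) (s t : Finset n)
    (hst : Fintype.card n < #s + #t) (h : ∀ i ∈ s, ∀ j ∈ t, M i j = 0) : M.det = 0 := by
  rw [det_apply]
  refine sum_eq_zero fun σ _ => ?_
  have hcard : #(univ : Finset n) < #(s.map σ.symm.toEmbedding) + #t := by
    simpa using hst
  obtain ⟨j, hj⟩ := inter_nonempty_of_card_lt_card_add_card (subset_univ _) (subset_univ _) hcard
  simp only [mem_inter, mem_map_equiv, Equiv.symm_symm] at hj
  rw [prod_eq_zero (f := fun i => M (σ i) i) (mem_univ j) (h _ hj.1 _ hj.2), smul_zero]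

theorem sum_det_updateCol_mul (M : Matrix n n R) (x : n → R) :
    ∑ j, (M.updateCol j fun i => x i * M i j).det = (∑ i, x i) * M.det := by
  have hterm : ∀ (σ : Equiv.Perm n) (j : n),
      ∏ i, M.updateCol j (fun i => x i * M i j) (σ i) i = x (σ j) * ∏ i, M (σ i) i := by
    intro σ j
    calc ∏ i, M.updateCol j (fun i => x i * M i j) (σ i) i
        = ∏ i, (if i = j then x (σ i) else 1) * M (σ i) i := by
          refine prod_congr rfl fun i _ => ?_
          by_cases hij : i = j <;> simp [hij]
      _ = x (σ j) * ∏ i, M (σ i) i := by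
          rw [prod_mul_distrib, prod_ite_eq', if_pos (mem_univ j)]
  simp only [det_apply', hterm]
  rw [sum_comm, mul_sum]
  refine sum_congr rfl fun σ _ => ?_
  rw [← Equiv.sum_comp σ x, sum_mul]
  exact sum_congr rfl fun j _ => by ring

theorem sum_det_updateCol_sub_mul (M : Matrix n n R) (x y : n → R) :
    ∑ j, (M.updateCol j fun i => (x i - y j) * M i j).det =
      (∑ i, x i - ∑ j, y j) * M.det := by
  have hcol : ∀ j, (M.updateCol j fun i => (x i - y j) * M i j).det =
      (M.updateCol j fun i => x i * M i j).det - y j * M.det := by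
    intro j
    have hsplit : (fun i => (x i - y j) * M i j) =
        (fun i => x i * M i j) + (-y j) • fun i => M i j := by
      ext i
      simp only [Pi.add_apply, Pi.smul_apply, smul_eq_mul]
      ring
    rw [hsplit, det_updateCol_add, det_updateCol_smul, updateCol_eq_self]
    ring
  rw [sum_congr rfl fun j _ => hcol j, sum_sub_distrib, sum_det_updateCol_mul, sub_mul, sum_mul,
    sum_mul]

theorem det_of_pow_sub_mul (t : R) (r c : n → ℕ) (K : Matrix n n R)
    (hK : ∀ i j, r i < c j → K i j = 0) :
    (of fun i j => t ^ (r i - c j) * K i j).det = t ^ (∑ i, r i - ∑ j, c j) * K.det := by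
  simp only [det_apply', of_apply, mul_sum]
  refine sum_congr rfl fun σ _ => ?_
  by_cases hle : ∀ i, c i ≤ r (σ i)
  · have hexp : ∑ i, (r (σ i) - c i) = ∑ i, r i - ∑ j, c j := by
      rw [sum_tsub_distrib _ fun i _ => hle i, Equiv.sum_comp σ r]
    rw [prod_mul_distrib, prod_pow_eq_pow_sum, hexp]
    ring
  · push Not at hle
    obtain ⟨i, hi⟩ := hle
    rw [prod_eq_zero (f := fun i => K (σ i) i) (mem_univ i) (hK _ _ hi),
      prod_eq_zero (mem_univ i) (by rw [hK _ _ hi, mul_zero])]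
    ring

end Matrix

section Update

variable {ι : Type*} [DecidableEq ι]

theorem StrictMono.monotone_update_succ [PartialOrder ι] {c : ι → ℕ} (hc : StrictMono c)
    (q : ι) : Monotone (Function.update c q (c q + 1)) := by
  intro a b hab
  simp only [Function.update_apply]
  split_ifs with ha hb hb
  · rfl
  · subst ha
    exact hc (lt_of_le_of_ne hab (Ne.symm hb))
  · subst hb
    exact (hc.monotone hab).trans (Nat.le_succ _)
  · exact hc.monotone hab

theorem strictMono_update_succ [Preorder ι] {r c : ι → ℕ}
    (hr : StrictMono r) (hc : StrictMono c) (hcr : ∀ l, c l ≤ r l) {q : ι} (hq : c q < r q)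
    (hmax : ∀ l, c l < r l → l ≤ q) : StrictMono (Function.update c q (c q + 1)) := by
  intro a b hab
  simp only [Function.update_apply]
  split_ifs with ha hb hb
  · exact absurd (ha.trans hb.symm ▸ hab) (lt_irrefl b)
  · subst ha
    have hcb : c b = r b :=
      le_antisymm (hcr b) (not_lt.mp fun h => (hmax b h).not_gt hab)
    have := hr hab
    omega
  · subst hb
    exact (hc hab).trans (Nat.lt_succ_self _)
  · exact hc hab

theorem sum_tsub_update_succ_lt [Fintype ι] {r c : ι → ℕ} {p : ι} (hp : c p < r p) :
    ∑ l, (r l - Function.update c p (c p + 1) l) < ∑ l, (r l - c l) := by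
  refine sum_lt_sum (fun l _ => ?_) ⟨p, mem_univ p, ?_⟩
  · simp only [Function.update_apply]
    split_ifs with hl
    · subst hl
      omega
    · rfl
  · simp only [Function.update_self]
    omega

end Update

def expShiftEntry (i j : ℕ) : ℚ := if j ≤ i then ((i - j).factorial : ℚ)⁻¹ else 0

theorem expShiftEntry_of_lt {i j : ℕ} (h : i < j) : expShiftEntry i j = 0 := by
  simp [expShiftEntry, not_le.mpr h]

theorem expShiftEntry_self (i : ℕ) : expShiftEntry i i = 1 := by
  simp [expShiftEntry]

theorem sub_mul_expShiftEntry (i j : ℕ) :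
    ((i : ℚ) - j) * expShiftEntry i j = expShiftEntry i (j + 1) := by
  rcases lt_trichotomy j i with h | rfl | h
  · obtain ⟨d, rfl⟩ := Nat.exists_eq_add_of_lt h
    simp only [expShiftEntry, if_pos h.le, if_pos (show j + 1 ≤ j + d + 1 by omega),
      show j + d + 1 - j = d + 1 by omega, show j + d + 1 - (j + 1) = d by omega,
      Nat.factorial_succ]
    push_cast
    field_simp
    ring
  · simp [expShiftEntry_of_lt (Nat.lt_succ_self j)]
  · simp [expShiftEntry_of_lt h, expShiftEntry_of_lt (h.trans (Nat.lt_succ_self j))]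

theorem lowerShift_pow_apply (n m : ℕ) (i j : Fin n) :
    (lowerShift n ^ m) i j = if (i : ℕ) = j + m then 1 else 0 := by
  induction m generalizing i j with
  | zero => simp [one_apply, Fin.ext_iff]
  | succ m ih =>
    rw [pow_succ, mul_apply]
    simp only [ih]
    simp only [lowerShift, of_apply, mul_ite, mul_one, mul_zero]
    rw [Fin.sum_univ_eq_sum_range
      (fun l => if l = j + 1 then if (i : ℕ) = l + m then 1 else 0 else 0), sum_ite_eq']
    have := i.isLt
    split_ifs <;> first | rfl | (simp only [mem_range] at *; omega)

theorem lowerShift_pow_of_le {n m : ℕ} (h : n ≤ m) : lowerShift n ^ m = 0 := by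
  ext i j
  rw [lowerShift_pow_apply, if_neg (by omega), Matrix.zero_apply]

theorem exp_smul_lowerShift (n : ℕ) (t : ℝ) :
    NormedSpace.exp (t • lowerShift n) =
      ∑ m ∈ range n, (t ^ m * (m.factorial : ℝ)⁻¹) • lowerShift n ^ m := by
  rw [NormedSpace.exp_eq_tsum ℝ]
  simp only [smul_pow, smul_smul, mul_comm]
  exact tsum_eq_sum fun m hm => by rw [lowerShift_pow_of_le (by simpa using hm), smul_zero]

theorem exp_smul_lowerShift_apply (n : ℕ) (t : ℝ) (i j : Fin n) :
    NormedSpace.exp (t • lowerShift n) i j = t ^ ((i : ℕ) - j) * expShiftEntry i j := by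
  rw [exp_smul_lowerShift, Matrix.sum_apply]
  simp only [Matrix.smul_apply, lowerShift_pow_apply, smul_eq_mul, mul_ite, mul_one, mul_zero]
  by_cases h : (j : ℕ) ≤ i
  · have hm : ∀ m, ((i : ℕ) = j + m ↔ m = i - j) := fun m => by omega
    simp only [hm, sum_ite_eq', mem_range, expShiftEntry, if_pos h]
    rw [if_pos (by omega), Rat.cast_inv, Rat.cast_natCast]
  · rw [expShiftEntry, if_neg h, Rat.cast_zero, mul_zero]
    exact sum_eq_zero fun m _ => if_neg (by omega)

section Minor

variable {k : ℕ}

def expShiftMinor (r c : Fin k → ℕ) : ℚ := (of fun a b => expShiftEntry (r a) (c b)).det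

theorem expShiftMinor_self {r : Fin k → ℕ} (hr : StrictMono r) : expShiftMinor r r = 1 := by
  rw [expShiftMinor, det_of_isLowerTriangular (of fun a b => expShiftEntry (r a) (r b))
    fun a b hab => expShiftEntry_of_lt (hr (OrderDual.toDual_lt_toDual.mp hab))]
  simp [expShiftEntry_self]

theorem expShiftMinor_eq_zero {r c : Fin k → ℕ} (hr : Monotone r) (hc : Monotone c)
    (h : ∃ l, r l < c l) : expShiftMinor r c = 0 := by
  obtain ⟨l, hl⟩ := h
  refine det_eq_zero_of_card_lt_card_add_card _ (Iic l) (Ici l) ?_ fun a ha b hb => ?_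
  · simp only [Fintype.card_fin, Fin.card_Iic, Fin.card_Ici]
    omega
  · exact expShiftEntry_of_lt ((hr (mem_Iic.mp ha)).trans_lt (hl.trans_le (hc (mem_Ici.mp hb))))

theorem sum_expShiftMinor_update_succ (r c : Fin k → ℕ) :
    ∑ q, expShiftMinor r (Function.update c q (c q + 1)) =
      (∑ l, (r l : ℚ) - ∑ l, (c l : ℚ)) * expShiftMinor r c := by
  rw [expShiftMinor, ← sum_det_updateCol_sub_mul]
  refine sum_congr rfl fun q _ => congrArg det ?_
  ext a b
  by_cases hb : b = q
  · subst hb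
    simp [sub_mul_expShiftEntry]
  · simp [hb]

theorem expShiftMinor_pos {r c : Fin k → ℕ} (hr : StrictMono r) (hc : StrictMono c)
    (hcr : ∀ l, c l ≤ r l) : 0 < expShiftMinor r c := by
  induction hD : ∑ l, (r l - c l) using Nat.strong_induction_on generalizing c with
  | _ D ih =>
  by_cases hrc : ∀ l, c l = r l
  · rw [show c = r from funext hrc, expShiftMinor_self hr]
    exact one_pos
  push Not at hrc
  have hne : (univ.filter fun l => c l < r l).Nonempty := by
    obtain ⟨l, hl⟩ := hrc
    exact ⟨l, mem_filter.mpr ⟨mem_univ l, lt_of_le_of_ne (hcr l) hl⟩⟩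
  obtain ⟨q, hq, hmax⟩ := (univ.filter fun l => c l < r l).exists_max_image id hne
  simp only [mem_filter, mem_univ, true_and, id] at hq hmax
  have hterm : ∀ p, 0 ≤ expShiftMinor r (Function.update c p (c p + 1)) := by
    intro p
    have hmono := hc.monotone_update_succ p
    by_cases hinj : Function.Injective (Function.update c p (c p + 1))
    · by_cases hdom : ∀ l, Function.update c p (c p + 1) l ≤ r l
      · have hp : c p < r p := by simpa using hdom p
        exact (ih _ (hD ▸ sum_tsub_update_succ_lt hp) (hmono.strictMono_of_injective hinj)
          hdom rfl).le
      · push Not at hdom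
        exact (expShiftMinor_eq_zero hr.monotone hmono hdom).ge
    · simp only [Function.Injective, not_forall] at hinj
      obtain ⟨a, b, hab, hne⟩ := hinj
      exact (det_zero_of_column_eq hne fun i => by simp only [of_apply, hab]).ge
  have hpos : 0 < expShiftMinor r (Function.update c q (c q + 1)) := by
    refine ih _ (hD ▸ sum_tsub_update_succ_lt hq)
      (strictMono_update_succ hr hc hcr hq hmax) (fun l => ?_) rfl
    by_cases hl : l = q
    · subst hl
      simpa using hq
    · simpa [hl] using hcr l
  have hsum : 0 < ∑ l, (r l : ℚ) - ∑ l, (c l : ℚ) := by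
    have : ∑ l, c l < ∑ l, r l := sum_lt_sum (fun l _ => hcr l) ⟨q, mem_univ q, hq⟩
    exact sub_pos.mpr (by exact_mod_cast this)
  refine pos_of_mul_pos_right ?_ hsum.le
  rw [← sum_expShiftMinor_update_succ]
  exact sum_pos' (fun p _ => hterm p) ⟨q, mem_univ q, hpos⟩

theorem expShiftMinor_nonneg {r c : Fin k → ℕ} (hr : StrictMono r) (hc : StrictMono c) :
    0 ≤ expShiftMinor r c := by
  by_cases hcr : ∀ l, c l ≤ r l
  · exact (expShiftMinor_pos hr hc hcr).le
  · push Not at hcr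
    exact (expShiftMinor_eq_zero hr.monotone hc.monotone hcr).ge

end Minor

/-- every minor of `exp(tN)` (on strictly increasing row and column index
sets) has the form `a·t^d` with `a ≥ 0` rational and `d` a nonnegative integer; if the
row indices dominate the column indices (`i_l ≥ j_l` for all `l`) then `a > 0`. -/
theorem minor_exp_lowerShift (n : ℕ) (k : ℕ) (r c : Fin k → Fin n)
    (hr : StrictMono r) (hc : StrictMono c) :
    ∃ (a : ℚ) (d : ℕ), 0 ≤ a ∧
      (∀ t : ℝ, ((NormedSpace.exp (t • lowerShift n)).submatrix r c).det =
        (a : ℝ) * t ^ d) ∧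
      ((∀ l : Fin k, (c l : ℕ) ≤ (r l : ℕ)) → 0 < a) := by
  have hr' : StrictMono fun l => (r l : ℕ) := Fin.val_strictMono.comp hr
  have hc' : StrictMono fun l => (c l : ℕ) := Fin.val_strictMono.comp hc
  refine ⟨expShiftMinor (fun l => r l) (fun l => c l), ∑ l, (r l : ℕ) - ∑ l, (c l : ℕ),
    expShiftMinor_nonneg hr' hc', fun t => ?_, expShiftMinor_pos hr' hc'⟩
  have hsub : (NormedSpace.exp (t • lowerShift n)).submatrix r c = of fun a b =>
      t ^ ((r a : ℕ) - c b) *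
        (Rat.castHom ℝ).mapMatrix (of fun a b => expShiftEntry (r a) (c b)) a b := by
    ext a b
    simp [exp_smul_lowerShift_apply]
  rw [hsub, det_of_pow_sub_mul _ _ _ _ fun a b h => by simp [expShiftEntry_of_lt h],
    ← RingHom.map_det, mul_comm]
  rfl
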